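/- Let B, C be base hierarchies with C a good successor of B, n ∈ ℕ, b ∈ B, and c ∈ C with c ≥ ↑b. Then: (1) b divides n if and only if c divides ⌈b→c⌉(n); (2) if n =_b b^e a + r is the b-decomposition, then the b-decomposition of ⌈b→c⌉(n) in base c is c^(⌈b→c⌉(e)) · ↑a + ⌈b→c⌉(r). -/

import Mathlib

/-- `n =_b b^e·a + r` is the `b`-decomposition of `n`. -/
def BDecomp (b n e a r : ℕ) : Prop :=
  n = b ^ e * a + r ∧ b ^ e ≤ n ∧ n < b ^ (e + 1) ∧ 0 < a ∧ a < b ∧ r < b ^ e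

/-- `c = S_B(b)`, the successor of `b` in `B` (when it exists). -/
def SuccIn (B : Set ℕ) (b c : ℕ) : Prop := IsLeast {x | x ∈ B ∧ b < x} c

/-- A base hierarchy: a nonempty set of naturals `≥ 2` in which every element
divides its successor (`b ∣ S_B(b)`; vacuous when `S_B(b) = ∞`). -/
def IsBaseHierarchy (B : Set ℕ) : Prop :=
  B.Nonempty ∧ (∀ b ∈ B, 2 ≤ b) ∧ ∀ b ∈ B, ∀ c, SuccIn B b c → b ∣ c

/-- `b = base_B(n)`: the largest element of `B` that is `≤ n`, or `min B` if
`n < min B`. -/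
def IsBaseOf (B : Set ℕ) (n b : ℕ) : Prop :=
  ((∃ x ∈ B, x ≤ n) ∧ IsGreatest {x | x ∈ B ∧ x ≤ n} b) ∨
  ((∀ x ∈ B, n < x) ∧ IsLeast B b)

/-- `n` is `B`-critical if `base_B(n) ∣ n`. -/
def Critical (B : Set ℕ) (n : ℕ) : Prop := ∃ b, IsBaseOf B n b ∧ b ∣ n

/-!
The base change `f = ⌈b→c⌉` sends the `b`-decomposition `n = b^e·a + r` to `c^(f e)·↑a + f r`,
which is the `c`-decomposition as soon as `f r < c^(f e)`. This bound and the strict monotonicity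
of `f` are proved together by strong induction: `r < b^e` has an exponent smaller than `e`, and
monotonicity at `n` is the lexicographic comparison of decompositions, which both bases respect.
Strict monotonicity of the upgrade itself comes from `↑(n - 1) < ↑n`, part of its definition.
Divisibility by the base only sees the lower block: `b ∣ n` iff `e ≠ 0` and `b ∣ r`, and since `f`
is injective with `f 0 = 0` the same holds for `c ∣ f n`; induction on `r` concludes.
-/

namespace BDecomp

variable {b n e a r : ℕ}

theorem eq_add (h : BDecomp b n e a r) : n = b ^ e * a + r := h.1

theorem pow_le (h : BDecomp b n e a r) : b ^ e ≤ n := h.2.1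

theorem lt_pow_succ (h : BDecomp b n e a r) : n < b ^ (e + 1) := h.2.2.1

theorem digit_pos (h : BDecomp b n e a r) : 0 < a := h.2.2.2.1

theorem digit_lt (h : BDecomp b n e a r) : a < b := h.2.2.2.2.1

theorem rem_lt (h : BDecomp b n e a r) : r < b ^ e := h.2.2.2.2.2

theorem pos (h : BDecomp b n e a r) : 0 < n :=
  (pow_pos (h.digit_pos.trans h.digit_lt) e).trans_le h.pow_le

theorem rem_lt_self (h : BDecomp b n e a r) : r < n :=
  h.rem_lt.trans_le h.pow_le

theorem exp_lt_self (hb : 1 < b) (h : BDecomp b n e a r) : e < n :=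
  (Nat.lt_pow_self hb).trans_le h.pow_le

theorem of_lt_pow (ha : 0 < a) (hab : a < b) (hr : r < b ^ e) :
    BDecomp b (b ^ e * a + r) e a r := by
  refine ⟨rfl, ?_, ?_, ha, hab, hr⟩
  · exact le_add_right (Nat.le_mul_of_pos_right _ ha)
  · calc b ^ e * a + r < b ^ e * (a + 1) := by rw [mul_add_one]; omega
      _ ≤ b ^ e * b := Nat.mul_le_mul_left _ hab
      _ = b ^ (e + 1) := (pow_succ b e).symm

theorem exists_of_ne_zero (hb : 1 < b) (hn : n ≠ 0) : ∃ e a r, BDecomp b n e a r := by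
  have hpow : 0 < b ^ Nat.log b n := pow_pos (by omega) _
  have hle : b ^ Nat.log b n ≤ n := Nat.pow_log_le_self b hn
  have hlt : n < b * b ^ Nat.log b n := pow_succ' b _ ▸ Nat.lt_pow_succ_log_self hb n
  have h := of_lt_pow ((Nat.one_le_div_iff hpow).2 hle) ((Nat.div_lt_iff_lt_mul hpow).2 hlt)
    (Nat.mod_lt n hpow)
  rw [Nat.div_add_mod] at h
  exact ⟨_, _, _, h⟩

theorem eq_of_lt_base (h : BDecomp b n e a r) (hn : n < b) : e = 0 ∧ a = n ∧ r = 0 := by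
  obtain ⟨heq, hle, -, -, -, hr⟩ := h
  have he : e = 0 := by
    by_contra he
    have : b ≤ b ^ e := Nat.le_self_pow he b
    omega
  subst he
  simp only [pow_zero, one_mul] at heq hr
  omega

theorem lt_of_exp_lt {m e' a' r' : ℕ} (hm : BDecomp b m e' a' r') (hn : BDecomp b n e a r)
    (he : e' < e) : m < n :=
  calc m < b ^ (e' + 1) := hm.lt_pow_succ
    _ ≤ b ^ e := Nat.pow_le_pow_right (hm.digit_pos.trans hm.digit_lt) he
    _ ≤ n := hn.pow_le

theorem lt_of_digit_lt {m a' r' : ℕ} (hm : BDecomp b m e a' r') (hn : BDecomp b n e a r)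
    (ha : a' < a) : m < n :=
  calc m = b ^ e * a' + r' := hm.eq_add
    _ < b ^ e * (a' + 1) := by rw [mul_add_one]; have := hm.rem_lt; omega
    _ ≤ b ^ e * a := Nat.mul_le_mul_left _ ha
    _ ≤ n := hn.eq_add ▸ le_add_right le_rfl

theorem lex_lt_of_lt {m e' a' r' : ℕ} (hm : BDecomp b m e' a' r') (hn : BDecomp b n e a r)
    (hmn : m < n) : e' < e ∨ e' = e ∧ (a' < a ∨ a' = a ∧ r' < r) := by
  rcases lt_trichotomy e' e with he | rfl | he
  · exact Or.inl he
  · rcases lt_trichotomy a' a with ha | rfl | ha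
    · exact Or.inr ⟨rfl, Or.inl ha⟩
    · have := hm.eq_add; have := hn.eq_add
      exact Or.inr ⟨rfl, Or.inr ⟨rfl, by omega⟩⟩
    · exact absurd (lt_of_digit_lt hn hm ha) (by omega)
  · exact absurd (lt_of_exp_lt hn hm he) (by omega)

theorem dvd_iff (h : BDecomp b n e a r) : b ∣ n ↔ e ≠ 0 ∧ b ∣ r := by
  rcases eq_or_ne e 0 with rfl | he
  · obtain ⟨-, rfl, -⟩ := h.eq_of_lt_base (by simpa using h.lt_pow_succ)
    simpa using Nat.not_dvd_of_pos_of_lt h.digit_pos h.digit_lt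
  · rw [h.eq_add, Nat.dvd_add_right ((dvd_pow_self b he).mul_right a), and_iff_right he]

end BDecomp

theorem exists_isBaseOf {B : Set ℕ} {n : ℕ} (h : ∃ x ∈ B, x ≤ n) : ∃ b, IsBaseOf B n b :=
  (BddAbove.exists_isGreatest_of_nonempty ⟨n, fun _ hx => hx.2⟩ h).imp
    fun _ hb => Or.inl ⟨h, hb⟩

theorem strictMono_of_upgrade {B C : Set ℕ} {up : ℕ → ℕ} {chg : ℕ → ℕ → ℕ → ℕ}
    (hup_small : ∀ n, (∀ x ∈ B, n < x) → up n = n)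
    (hup_big : ∀ n b, (∃ x ∈ B, x ≤ n) → IsBaseOf B n b →
      ∃ c, IsLeast {c' | c' ∈ C ∧ up (n - 1) < chg b c' n ∧
          ∀ d, SuccIn C c' d → chg b c' n < d} c ∧ up n = chg b c n) :
    StrictMono up := by
  refine strictMono_nat_of_lt_succ fun k => ?_
  by_cases hsmall : ∀ x ∈ B, k + 1 < x
  · rw [hup_small k fun x hx => (hsmall x hx).trans' k.lt_succ_self, hup_small (k + 1) hsmall]
    exact k.lt_succ_self
  · push Not at hsmall
    obtain ⟨b, hbase⟩ := exists_isBaseOf hsmall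
    obtain ⟨c, hc, hup⟩ := hup_big (k + 1) b hsmall hbase
    exact hup ▸ hc.1.2.1

/-- `f` is the base change `⌈b→c⌉` over the upgrade `up`. -/
structure IsHereditaryBaseChange (b c : ℕ) (up f : ℕ → ℕ) : Prop where
  apply_of_lt : ∀ m < b, f m = up m
  apply_of_le : ∀ m e a r, b ≤ m → BDecomp b m e a r → f m = c ^ f e * up a + f r

namespace IsHereditaryBaseChange

variable {b c : ℕ} {up f : ℕ → ℕ}

theorem apply_zero (hf : IsHereditaryBaseChange b c up f) (hb : 0 < b) (hup0 : up 0 = 0) :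
    f 0 = 0 :=
  (hf.apply_of_lt 0 hb).trans hup0

/-- The defining recursion holds below `b` as well, where the decomposition is `n = b⁰·n + 0`. -/
theorem apply_eq {n e a r : ℕ} (hf : IsHereditaryBaseChange b c up f) (hup0 : up 0 = 0)
    (h : BDecomp b n e a r) : f n = c ^ f e * up a + f r := by
  rcases lt_or_ge n b with hn | hn
  · obtain ⟨rfl, rfl, rfl⟩ := h.eq_of_lt_base hn
    rw [hf.apply_zero (h.pos.trans hn) hup0, hf.apply_of_lt _ hn]
    simp
  · exact hf.apply_of_le n e a r hn h

theorem strictMono_and_bDecomp (hf : IsHereditaryBaseChange b c up f) (hb : 1 < b)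
    (hup : StrictMono up) (hup0 : up 0 = 0) (hcb : up b ≤ c) (n : ℕ) :
    (∀ m < n, f m < f n) ∧
      ∀ e a r, BDecomp b n e a r → BDecomp c (f n) (f e) (up a) (f r) := by
  induction n using Nat.strong_induction_on with
  | _ n ih =>
  have hf0 : f 0 = 0 := hf.apply_zero (by omega) hup0
  have hc : 0 < c := (hup0 ▸ hup (by omega : 0 < b)).trans_le hcb
  have hdecomp : ∀ e a r, BDecomp b n e a r → BDecomp c (f n) (f e) (up a) (f r) := by
    intro e a r hd
    have hr : f r < c ^ f e := by
      rcases eq_or_ne r 0 with rfl | hr0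
      · rw [hf0]; exact pow_pos hc _
      obtain ⟨e', a', r', hd'⟩ := BDecomp.exists_of_ne_zero hb hr0
      have he' : e' < e := (Nat.pow_lt_pow_iff_right hb).1 (hd'.pow_le.trans_lt hd.rem_lt)
      calc f r < c ^ (f e' + 1) := ((ih r hd.rem_lt_self).2 e' a' r' hd').lt_pow_succ
        _ ≤ c ^ f e := Nat.pow_le_pow_right hc ((ih e (hd.exp_lt_self hb)).1 e' he')
    rw [hf.apply_eq hup0 hd]
    exact BDecomp.of_lt_pow (hup0 ▸ hup hd.digit_pos) ((hup hd.digit_lt).trans_le hcb) hr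
  refine ⟨fun m hm => ?_, hdecomp⟩
  obtain ⟨e, a, r, hdn⟩ := BDecomp.exists_of_ne_zero hb (by omega : n ≠ 0)
  have hn' := hdecomp e a r hdn
  rcases eq_or_ne m 0 with rfl | hm0
  · rw [hf0]; exact hn'.pos
  obtain ⟨e', a', r', hdm⟩ := BDecomp.exists_of_ne_zero hb hm0
  have hm' := (ih m hm).2 e' a' r' hdm
  rcases hdm.lex_lt_of_lt hdn hm with he | ⟨rfl, ha | ⟨rfl, hr⟩⟩
  · exact hm'.lt_of_exp_lt hn' ((ih e (hdn.exp_lt_self hb)).1 e' he)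
  · exact hm'.lt_of_digit_lt hn' (hup ha)
  · rw [hm'.eq_add, hn'.eq_add]
    exact Nat.add_lt_add_left ((ih r hdn.rem_lt_self).1 r' hr) _

theorem strictMono (hf : IsHereditaryBaseChange b c up f) (hb : 1 < b)
    (hup : StrictMono up) (hup0 : up 0 = 0) (hcb : up b ≤ c) : StrictMono f :=
  fun m n hmn => (hf.strictMono_and_bDecomp hb hup hup0 hcb n).1 m hmn

theorem bDecomp (hf : IsHereditaryBaseChange b c up f) (hb : 1 < b)
    (hup : StrictMono up) (hup0 : up 0 = 0) (hcb : up b ≤ c) {n e a r : ℕ}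
    (h : BDecomp b n e a r) : BDecomp c (f n) (f e) (up a) (f r) :=
  (hf.strictMono_and_bDecomp hb hup hup0 hcb n).2 e a r h

theorem dvd_iff (hf : IsHereditaryBaseChange b c up f) (hb : 1 < b)
    (hup : StrictMono up) (hup0 : up 0 = 0) (hcb : up b ≤ c) (n : ℕ) : b ∣ n ↔ c ∣ f n := by
  induction n using Nat.strong_induction_on with
  | _ n ih =>
  have hf0 : f 0 = 0 := hf.apply_zero (by omega) hup0
  rcases eq_or_ne n 0 with rfl | hn
  · simp [hf0]
  obtain ⟨e, a, r, hd⟩ := BDecomp.exists_of_ne_zero hb hn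
  have hexp : f e ≠ 0 ↔ e ≠ 0 := (hf.strictMono hb hup hup0 hcb).injective.ne_iff' hf0
  rw [hd.dvd_iff, (hf.bDecomp hb hup hup0 hcb hd).dvd_iff, hexp, ih r hd.rem_lt_self]

end IsHereditaryBaseChange

theorem stmt13_general (B C : Set ℕ) (hB : IsBaseHierarchy B)
    (up : ℕ → ℕ) (chg : ℕ → ℕ → ℕ → ℕ)
    (hup_small : ∀ n, (∀ x ∈ B, n < x) → up n = n)
    (hchg_small : ∀ b c m, m < b → chg b c m = up m)
    (hchg_big : ∀ b c m e a r, b ≤ m → BDecomp b m e a r →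
      chg b c m = c ^ chg b c e * up a + chg b c r)
    (hup_big : ∀ n b, (∃ x ∈ B, x ≤ n) → IsBaseOf B n b →
      ∃ c, IsLeast {c' | c' ∈ C ∧ up (n - 1) < chg b c' n ∧
          ∀ d, SuccIn C c' d → chg b c' n < d} c ∧ up n = chg b c n)
    (n b c : ℕ) (hb : b ∈ B) (hcb : up b ≤ c) :
    ((b ∣ n) ↔ c ∣ chg b c n) ∧
    (∀ e a r, BDecomp b n e a r →
      BDecomp c (chg b c n) (chg b c e) (up a) (chg b c r)) := by
  have hb1 : 1 < b := hB.2.1 b hb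
  have hup := strictMono_of_upgrade hup_small hup_big
  have hup0 : up 0 = 0 := hup_small 0 fun x hx => two_pos.trans_le (hB.2.1 x hx)
  have hf : IsHereditaryBaseChange b c up (chg b c) := ⟨hchg_small b c, hchg_big b c⟩
  exact ⟨hf.dvd_iff hb1 hup hup0 hcb n, fun _ _ _ => hf.bDecomp hb1 hup hup0 hcb⟩

/-- if `C` is a good successor of `B`, `b ∈ B`, `c ∈ C` with
`c ≥ ↑b`, then (1) `b ∣ n ↔ c ∣ ⌈b→c⌉(n)`, and (2) if `n =_b b^e·a + r`, then
the `c`-decomposition of `⌈b→c⌉(n)` is `c^(⌈b→c⌉ e)·(↑a) + ⌈b→c⌉ r`. -/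
theorem stmt13 (B C : Set ℕ) (hB : IsBaseHierarchy B) (hC : IsBaseHierarchy C)
    (up : ℕ → ℕ) (chg : ℕ → ℕ → ℕ → ℕ)
    (hup_small : ∀ n, (∀ x ∈ B, n < x) → up n = n)
    (hchg_small : ∀ b c m, m < b → chg b c m = up m)
    (hchg_big : ∀ b c m e a r, b ≤ m → BDecomp b m e a r →
      chg b c m = c ^ chg b c e * up a + chg b c r)
    (hup_big : ∀ n b, (∃ x ∈ B, x ≤ n) → IsBaseOf B n b →
      ∃ c, IsLeast {c' | c' ∈ C ∧ up (n - 1) < chg b c' n ∧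
          ∀ d, SuccIn C c' d → chg b c' n < d} c ∧ up n = chg b c n)
    (hmin : ∀ mB mC, IsLeast B mB → IsLeast C mC → mB ≤ mC)
    (hgood : ∀ b ∈ B, (∀ mB, IsLeast B mB → mB < b) →
      ∀ e d k, IsBaseOf C (up (b - 1)) e → SuccIn C (up (b - 1)) d →
        up (b - 1) < k → k < d → ¬ e ∣ k)
    (n b c : ℕ) (hb : b ∈ B) (hc : c ∈ C) (hcb : up b ≤ c) :
    ((b ∣ n) ↔ c ∣ chg b c n) ∧
    (∀ e a r, BDecomp b n e a r →
      BDecomp c (chg b c n) (chg b c e) (up a) (chg b c r)) :=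
  stmt13_general B C hB up chg hup_small hchg_small hchg_big hup_big n b c hb hcb
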